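/- (Schatten norm under partial trace.) Let M be a complex matrix on the tensor product space ℂ^{d_A} ⊗ ℂ^{d_B} and let p ≥ 1 be a real number. Then ‖Tr_B(M)‖_p ≤ d_B^{(p−1)/p} · ‖M‖_p, where Tr_B denotes the partial trace over the second tensor factor. -/

import Mathlib

open Matrix
open scoped Kronecker Classical ComplexOrder

noncomputable section

/-- The qubit depolarizing channel `Δ_ρ(φ) = ρ·φ + (1-ρ)·Tr[φ]·I/2`. -/
def delta (ρ : ℝ) (φ : Matrix (Fin 2) (Fin 2) ℂ) : Matrix (Fin 2) (Fin 2) ℂ :=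
  (ρ : ℂ) • φ + (((1 - ρ : ℝ) : ℂ) * φ.trace / 2) • (1 : Matrix (Fin 2) (Fin 2) ℂ)

/-- `Δ_ρ^{⊗n}`, the n-fold tensor power of the depolarizing channel on n qubits. -/
def deltaPow (ρ : ℝ) (n : ℕ) (M : Matrix (Fin n → Fin 2) (Fin n → Fin 2) ℂ) :
    Matrix (Fin n → Fin 2) (Fin n → Fin 2) ℂ :=
  Matrix.of fun x y => ∑ a : Fin n → Fin 2, ∑ b : Fin n → Fin 2,
    M a b * ∏ i : Fin n, delta ρ (Matrix.single (a i) (b i) 1) (x i) (y i)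

/-- The tensor product `L1 ⊗ L2` of two (linear) maps on matrix spaces. -/
def lmTensor {I I' J J' : Type*} [Fintype I] [DecidableEq I]
    (L1 : Matrix I I ℂ → Matrix I' I' ℂ) (L2 : Matrix J J ℂ → Matrix J' J' ℂ)
    (M : Matrix (I × J) (I × J) ℂ) : Matrix (I' × J') (I' × J') ℂ :=
  Matrix.of fun p q => ∑ a : I, ∑ b : I,
    L1 (Matrix.single a b 1) p.1 q.1 *
      L2 (Matrix.of fun j j' => M (a, j) (b, j')) p.2 q.2

/-- Application of a single-qubit (linear) map `L` to the `k`-th qubit of an `N`-qubit register,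
i.e. `id ⊗ ... ⊗ L ⊗ ... ⊗ id`. -/
def applyAt {N : ℕ} (k : Fin N) (L : Matrix (Fin 2) (Fin 2) ℂ → Matrix (Fin 2) (Fin 2) ℂ)
    (M : Matrix (Fin N → Fin 2) (Fin N → Fin 2) ℂ) :
    Matrix (Fin N → Fin 2) (Fin N → Fin 2) ℂ :=
  Matrix.of fun x y => ∑ a : Fin 2, ∑ b : Fin 2,
    L (Matrix.single a b 1) (x k) (y k) *
      M (Function.update x k a) (Function.update y k b)

/-- The EPR state `|Φ⟩⟨Φ|` with `|Φ⟩ = (|00⟩+|11⟩)/√2`, as a bipartite 4×4 density matrix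
(first tensor factor is Alice's qubit, the second is Bob's). -/
def EPR : Matrix (Fin 2 × Fin 2) (Fin 2 × Fin 2) ℂ :=
  Matrix.of fun p q => if p.1 = p.2 ∧ q.1 = q.2 then (1 / 2 : ℂ) else 0

/-- `Φ^{⊗n}`: n EPR pairs as a bipartite state, with the first factor holding Alice's
n qubits and the second factor holding Bob's n qubits. -/
def eprPow (n : ℕ) :
    Matrix ((Fin n → Fin 2) × (Fin n → Fin 2)) ((Fin n → Fin 2) × (Fin n → Fin 2)) ℂ :=
  Matrix.of fun p q => ∏ i : Fin n, EPR (p.1 i, p.2 i) (q.1 i, q.2 i)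

/-- The ρ-isotropic state `Φ_ρ = (Δ_ρ ⊗ id)(Φ)`. -/
def iso (ρ : ℝ) : Matrix (Fin 2 × Fin 2) (Fin 2 × Fin 2) ℂ :=
  lmTensor (delta ρ) id EPR

/-- `Φ_ρ^{⊗n}`: n isotropic states as a bipartite state, with the first factor holding
Alice's n qubits and the second factor holding Bob's n qubits. -/
def isoPow (ρ : ℝ) (n : ℕ) :
    Matrix ((Fin n → Fin 2) × (Fin n → Fin 2)) ((Fin n → Fin 2) × (Fin n → Fin 2)) ℂ :=
  Matrix.of fun p q => ∏ i : Fin n, iso ρ (p.1 i, p.2 i) (q.1 i, q.2 i)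

/-- `|A| = √(Aᴴ A)`. -/
def matAbs {I : Type*} [Fintype I] [DecidableEq I] (A : Matrix I I ℂ) : Matrix I I ℂ :=
  ((Matrix.posSemidef_conjTranspose_mul_self A).isHermitian.eigenvectorUnitary : Matrix I I ℂ) *
    Matrix.diagonal ((↑) ∘ (Real.sqrt ·) ∘
      (Matrix.posSemidef_conjTranspose_mul_self A).isHermitian.eigenvalues) *
    (star (Matrix.posSemidef_conjTranspose_mul_self A).isHermitian.eigenvectorUnitary :
      Matrix I I ℂ)

/-- Real power `A^r` of a Hermitian matrix, via the functional calculus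
(junk value `0` on non-Hermitian matrices). -/
def mpow {I : Type*} [Fintype I] [DecidableEq I] (A : Matrix I I ℂ) (r : ℝ) :
    Matrix I I ℂ :=
  if hA : A.IsHermitian then
    (Matrix.IsHermitian.eigenvectorUnitary hA : Matrix I I ℂ) *
      Matrix.diagonal (fun i => ((hA.eigenvalues i ^ r : ℝ) : ℂ)) *
      (Matrix.IsHermitian.eigenvectorUnitary hA : Matrix I I ℂ)ᴴ
  else 0

/-- The Schatten `p`-norm `‖A‖_p = (Tr[|A|^p])^{1/p}`. -/
def schatten {I : Type*} [Fintype I] [DecidableEq I] (p : ℝ) (A : Matrix I I ℂ) : ℝ :=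
  ((mpow (matAbs A) p).trace).re ^ (1 / p)

/-- The spectral norm of a matrix: the largest singular value. -/
def specNorm {I : Type*} [Fintype I] [DecidableEq I] (A : Matrix I I ℂ) : ℝ :=
  ⨆ i, Real.sqrt ((Matrix.posSemidef_conjTranspose_mul_self A).isHermitian.eigenvalues i)

/-- Partial trace over the second tensor factor. -/
def ptraceB {I J : Type*} [Fintype J] (M : Matrix (I × J) (I × J) ℂ) : Matrix I I ℂ :=
  Matrix.of fun i j => ∑ b : J, M (i, b) (j, b)

/-- A linear map between matrix algebras is completely positive if all its ampliations
`id_m ⊗ L` preserve positive semidefiniteness. -/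
def IsCompletelyPositive {I J : Type*} [Fintype I] [DecidableEq I] [Fintype J]
    (L : Matrix I I ℂ →ₗ[ℂ] Matrix J J ℂ) : Prop :=
  ∀ (m : ℕ) (M : Matrix (Fin m × I) (Fin m × I) ℂ), M.PosSemidef →
    (lmTensor (id : Matrix (Fin m) (Fin m) ℂ → Matrix (Fin m) (Fin m) ℂ) (⇑L) M).PosSemidef

/-!
Let `N = Tr_B M` have singular value decomposition `N = U Σ V†` and put `X = V Σ^{p-1} U†`, so
that `Tr (X N) = ‖N‖_p^p`. Since `Tr (X · Tr_B M) = Tr ((X ⊗ 1) M)` and `X ⊗ 1` has the singular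
values of `X`, each repeated `d_B` times, Young's inequality for traces
`|Tr (A B)| ≤ (1 - 1/p) ‖A‖_{p/(p-1)}^{p/(p-1)} + (1/p) ‖B‖_p^p`, applied to `A = X ⊗ 1` and
`B = d_B M`, gives `d_B ‖N‖_p^p ≤ (1 - 1/p) d_B ‖N‖_p^p + (1/p) d_B^p ‖M‖_p^p`, that is
`‖N‖_p^p ≤ d_B^{p-1} ‖M‖_p^p`. Writing `A = U₁ Σ_a V₁†` and `B = U₂ Σ_b V₂†` with contractions
`U_i, V_i`, the trace inequality reduces to the scalar Young inequality `a^{p-1} b ≤ (1 - 1/p) a^p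
+ (1/p) b^p` averaged against the doubly substochastic matrix `|(V₁†U₂)_{ij}| |(V₂†U₁)_{ji}|`.
-/

open scoped Matrix.Norms.L2Operator

lemma Real.rpow_sub_one_mul_le {a b p : ℝ} (ha : 0 ≤ a) (hb : 0 ≤ b) (hp : 1 ≤ p) :
    a ^ (p - 1) * b ≤ (1 - 1 / p) * a ^ p + 1 / p * b ^ p := by
  have hp0 : p ≠ 0 := by positivity
  have h := Real.geom_mean_le_arith_mean2_weighted (w₁ := 1 - 1 / p) (w₂ := 1 / p)
    (sub_nonneg.mpr ((div_le_one (by positivity)).mpr hp)) (by positivity)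
    (Real.rpow_nonneg ha p) (Real.rpow_nonneg hb p) (by ring)
  rwa [← Real.rpow_mul ha, ← Real.rpow_mul hb, mul_one_div_cancel hp0, Real.rpow_one,
    show p * (1 - 1 / p) = p - 1 by field_simp] at h

lemma sum_sum_mul_rpow_sub_one_mul_le {m n : Type*} [Fintype m] [Fintype n]
    {w : m → n → ℝ} (hw : ∀ i j, 0 ≤ w i j) (hrow : ∀ i, ∑ j, w i j ≤ 1)
    (hcol : ∀ j, ∑ i, w i j ≤ 1) {a : m → ℝ} {b : n → ℝ} (ha : ∀ i, 0 ≤ a i)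
    (hb : ∀ j, 0 ≤ b j) {p : ℝ} (hp : 1 ≤ p) :
    ∑ i, ∑ j, w i j * a i ^ (p - 1) * b j ≤
      (1 - 1 / p) * ∑ i, a i ^ p + 1 / p * ∑ j, b j ^ p := by
  have hq : 0 ≤ 1 - 1 / p := sub_nonneg.mpr ((div_le_one (by positivity)).mpr hp)
  calc ∑ i, ∑ j, w i j * a i ^ (p - 1) * b j
      ≤ ∑ i, ∑ j, w i j * ((1 - 1 / p) * a i ^ p + 1 / p * b j ^ p) := by
        refine Finset.sum_le_sum fun i _ => Finset.sum_le_sum fun j _ => ?_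
        rw [mul_assoc]
        exact mul_le_mul_of_nonneg_left (Real.rpow_sub_one_mul_le (ha i) (hb j) hp) (hw i j)
    _ = (1 - 1 / p) * ∑ i, (∑ j, w i j) * a i ^ p + 1 / p * ∑ j, (∑ i, w i j) * b j ^ p := by
        simp only [mul_add, Finset.sum_add_distrib, Finset.mul_sum, Finset.sum_mul]
        rw [Finset.sum_comm (γ := n)]
        congr 1 <;> refine Finset.sum_congr rfl fun _ _ => Finset.sum_congr rfl fun _ _ => ?_ <;>
          ring
    _ ≤ (1 - 1 / p) * ∑ i, a i ^ p + 1 / p * ∑ j, b j ^ p := by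
        gcongr with i _ j _
        · exact mul_le_of_le_one_left (Real.rpow_nonneg (ha i) p) (hrow i)
        · exact mul_le_of_le_one_left (Real.rpow_nonneg (hb j) p) (hcol j)

lemma le_rpow_sub_one_mul_of_mul_le {d S T p : ℝ} (hd : 0 < d) (hp : 1 ≤ p)
    (h : d * S ≤ (1 - 1 / p) * (d * S) + 1 / p * (d ^ p * T)) : S ≤ d ^ (p - 1) * T := by
  have hdp : d ^ p = d * d ^ (p - 1) := by
    rw [mul_comm, ← Real.rpow_add_one' hd.le (by linarith), sub_add_cancel]
  have h' : 1 / p * (d * S) ≤ 1 / p * (d * (d ^ (p - 1) * T)) := by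
    rw [← mul_assoc d, ← hdp]
    linarith
  exact le_of_mul_le_mul_left (le_of_mul_le_mul_left h' (by positivity)) hd

namespace Matrix

section Contraction

variable {m n : Type*} [Fintype m] [Fintype n] [DecidableEq n]

lemma sum_norm_sq_col_le_l2_opNorm_sq (W : Matrix m n ℂ) (j : n) :
    ∑ i, ‖W i j‖ ^ 2 ≤ ‖W‖ ^ 2 := by
  have h := l2_opNorm_mulVec W (EuclideanSpace.single j 1)
  rw [PiLp.norm_single, norm_one, mul_one] at h
  have h2 := pow_le_pow_left₀ (norm_nonneg _) h 2
  rw [EuclideanSpace.norm_sq_eq] at h2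
  simpa [mulVec_single_one] using h2

lemma sum_norm_sq_row_le_l2_opNorm_sq [DecidableEq m] (W : Matrix m n ℂ) (i : m) :
    ∑ j, ‖W i j‖ ^ 2 ≤ ‖W‖ ^ 2 := by
  simpa [l2_opNorm_conjTranspose] using sum_norm_sq_col_le_l2_opNorm_sq Wᴴ i

lemma l2_opNorm_le_one_of_conjTranspose_mul_self_eq_diagonal {W : Matrix m n ℂ} {d : n → ℂ}
    (hW : Wᴴ * W = diagonal d) (hd : ∀ i, ‖d i‖ ≤ 1) : ‖W‖ ≤ 1 := by
  have h : ‖W‖ * ‖W‖ ≤ 1 := by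
    rw [← l2_opNorm_conjTranspose_mul_self, hW, l2_opNorm_diagonal]
    exact pi_norm_le_iff_of_nonneg zero_le_one |>.mpr hd
  nlinarith [norm_nonneg W]

lemma l2_opNorm_le_one_of_mem_unitaryGroup {V : Matrix n n ℂ} (hV : V ∈ unitaryGroup n ℂ) :
    ‖V‖ ≤ 1 :=
  l2_opNorm_le_one_of_conjTranspose_mul_self_eq_diagonal (d := 1)
    (by rw [← star_eq_conjTranspose, mem_unitaryGroup_iff'.mp hV]; exact diagonal_one.symm)
    (fun _ => by simp)

lemma l2_opNorm_conjTranspose_mul_le_one [DecidableEq m] {U V : Matrix m n ℂ} (hU : ‖U‖ ≤ 1)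
    (hV : ‖V‖ ≤ 1) : ‖Vᴴ * U‖ ≤ 1 :=
  (l2_opNorm_mul _ _).trans <| by
    rw [l2_opNorm_conjTranspose]
    exact mul_le_one₀ hV (norm_nonneg U) hU

lemma l2_opNorm_kronecker_one_le {J : Type*} [Fintype J] [DecidableEq J] [DecidableEq m]
    (W : Matrix m n ℂ) : ‖W ⊗ₖ (1 : Matrix J J ℂ)‖ ≤ ‖W‖ := by
  rw [l2_opNorm_def]
  refine ContinuousLinearMap.opNorm_le_bound _ (norm_nonneg _) fun x => ?_
  have hcol : ∀ j : J, ∑ i, ‖∑ k, W i k * x (k, j)‖ ^ 2 ≤ ‖W‖ ^ 2 * ∑ k, ‖x (k, j)‖ ^ 2 := by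
    intro j
    have h := l2_opNorm_mulVec W (WithLp.toLp 2 fun k => x (k, j))
    have h2 := pow_le_pow_left₀ (norm_nonneg _) h 2
    rw [mul_pow, EuclideanSpace.norm_sq_eq, EuclideanSpace.norm_sq_eq] at h2
    simpa [mulVec, dotProduct] using h2
  refine (sq_le_sq₀ (norm_nonneg _) (by positivity)).mp ?_
  rw [mul_pow, EuclideanSpace.norm_sq_eq, EuclideanSpace.norm_sq_eq, Fintype.sum_prod_type_right,
    Fintype.sum_prod_type_right, Finset.mul_sum]
  refine Finset.sum_le_sum fun j _ => le_of_eq_of_le ?_ (hcol j)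
  simp [mulVec, dotProduct, Fintype.sum_prod_type, one_apply]

lemma sum_norm_mul_norm_le_one [DecidableEq m] {P : Matrix m n ℂ} {Q : Matrix n m ℂ}
    (hP : ‖P‖ ≤ 1) (hQ : ‖Q‖ ≤ 1) (i : m) : ∑ j, ‖P i j‖ * ‖Q j i‖ ≤ 1 := by
  have hrow : ∑ j, ‖P i j‖ ^ 2 ≤ 1 :=
    (sum_norm_sq_row_le_l2_opNorm_sq P i).trans (pow_le_one₀ (norm_nonneg P) hP)
  have hcol : ∑ j, ‖Q j i‖ ^ 2 ≤ 1 :=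
    (sum_norm_sq_col_le_l2_opNorm_sq Q i).trans (pow_le_one₀ (norm_nonneg Q) hQ)
  have hcs := Finset.sum_mul_sq_le_sq_mul_sq Finset.univ (fun j => ‖P i j‖) (fun j => ‖Q j i‖)
  refine (pow_le_one_iff_of_nonneg (by positivity) two_ne_zero).mp (hcs.trans ?_)
  exact mul_le_one₀ hrow (by positivity) hcol

end Contraction

section Trace

variable {m n : Type*} [Fintype m] [Fintype n] [DecidableEq m] [DecidableEq n]

lemma norm_trace_diagonal_mul_diagonal_mul_le (a : m → ℝ) (b : n → ℝ) (ha : ∀ i, 0 ≤ a i)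
    (hb : ∀ j, 0 ≤ b j) (P : Matrix m n ℂ) (Q : Matrix n m ℂ) :
    ‖(diagonal (fun i => (a i : ℂ)) * P * diagonal (fun j => (b j : ℂ)) * Q).trace‖ ≤
      ∑ i, ∑ j, ‖P i j‖ * ‖Q j i‖ * a i * b j := by
  have hentry : diagonal (fun i => (a i : ℂ)) * P * diagonal (fun j => (b j : ℂ)) =
      of fun i j => (a i : ℂ) * P i j * b j := by
    ext i j
    simp
  rw [hentry]
  simp only [trace, diag_apply, mul_apply, of_apply]
  refine (norm_sum_le _ _).trans (Finset.sum_le_sum fun i _ => ?_)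
  refine (norm_sum_le _ _).trans (le_of_eq (Finset.sum_congr rfl fun j _ => ?_))
  simp only [norm_mul, Complex.norm_real, Real.norm_of_nonneg (ha i), Real.norm_of_nonneg (hb j)]
  ring

/-- Young's inequality for traces, for `A` with singular values `a ^ (p - 1)` and `B` with
singular values `b`. -/
theorem norm_trace_mul_le_young {U₁ V₁ U₂ V₂ : Matrix m n ℂ} (hU₁ : ‖U₁‖ ≤ 1)
    (hV₁ : ‖V₁‖ ≤ 1) (hU₂ : ‖U₂‖ ≤ 1) (hV₂ : ‖V₂‖ ≤ 1) {a b : n → ℝ} (ha : ∀ i, 0 ≤ a i)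
    (hb : ∀ i, 0 ≤ b i) {p : ℝ} (hp : 1 ≤ p) :
    ‖(U₁ * diagonal (fun i => ((a i ^ (p - 1) : ℝ) : ℂ)) * V₁ᴴ *
        (U₂ * diagonal (fun i => (b i : ℂ)) * V₂ᴴ)).trace‖ ≤
      (1 - 1 / p) * ∑ i, a i ^ p + 1 / p * ∑ i, b i ^ p := by
  have hcycle : (U₁ * diagonal (fun i => ((a i ^ (p - 1) : ℝ) : ℂ)) * V₁ᴴ *
      (U₂ * diagonal (fun i => (b i : ℂ)) * V₂ᴴ)).trace =
      (diagonal (fun i => ((a i ^ (p - 1) : ℝ) : ℂ)) * (V₁ᴴ * U₂) *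
        diagonal (fun i => (b i : ℂ)) * (V₂ᴴ * U₁)).trace := by
    simp only [Matrix.mul_assoc]
    rw [trace_mul_comm U₁]
    simp only [Matrix.mul_assoc]
  have hP := l2_opNorm_conjTranspose_mul_le_one hU₂ hV₁
  have hQ := l2_opNorm_conjTranspose_mul_le_one hU₁ hV₂
  rw [hcycle]
  refine (norm_trace_diagonal_mul_diagonal_mul_le _ _ (fun i => Real.rpow_nonneg (ha i) _) hb
    _ _).trans (sum_sum_mul_rpow_sub_one_mul_le (fun _ _ => by positivity)
      (sum_norm_mul_norm_le_one hP hQ) (fun j => ?_) ha hb hp)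
  exact (Finset.sum_congr rfl fun i _ => mul_comm _ _).trans_le (sum_norm_mul_norm_le_one hQ hP j)

end Trace

section SingularValues

variable {ι : Type*} [Fintype ι] [DecidableEq ι]

lemma IsHermitian.eq_eigenvectorUnitary_mul_diagonal_mul {A : Matrix ι ι ℂ}
    (hA : A.IsHermitian) :
    A = (hA.eigenvectorUnitary : Matrix ι ι ℂ) * diagonal (fun i => (hA.eigenvalues i : ℂ)) *
      (hA.eigenvectorUnitary : Matrix ι ι ℂ)ᴴ := by
  conv_lhs => rw [hA.spectral_theorem, Unitary.conjStarAlgAut_apply]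
  rfl

lemma matAbs_posSemidef (A : Matrix ι ι ℂ) : (matAbs A).PosSemidef := by
  unfold matAbs
  rw [star_eq_conjTranspose]
  exact (posSemidef_diagonal_iff.mpr fun i => by simp).mul_mul_conjTranspose_same _

lemma matAbs_mul_matAbs (A : Matrix ι ι ℂ) : matAbs A * matAbs A = Aᴴ * A := by
  have hA := posSemidef_conjTranspose_mul_self A
  set W := hA.isHermitian.eigenvectorUnitary
  have hWW : star (W : Matrix ι ι ℂ) * W = 1 := Unitary.coe_star_mul_self W
  conv_rhs => rw [hA.isHermitian.eq_eigenvectorUnitary_mul_diagonal_mul]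
  unfold matAbs
  simp only [Matrix.mul_assoc]
  rw [← Matrix.mul_assoc (star (W : Matrix ι ι ℂ)), hWW, Matrix.one_mul,
    ← Matrix.mul_assoc (diagonal _), diagonal_mul_diagonal, star_eq_conjTranspose]
  congr 3
  ext i
  simp only [Function.comp_apply]
  rw [← Complex.ofReal_mul, Real.mul_self_sqrt (hA.eigenvalues_nonneg i)]

def singularValues (A : Matrix ι ι ℂ) : ι → ℝ := (matAbs_posSemidef A).isHermitian.eigenvalues

lemma singularValues_nonneg (A : Matrix ι ι ℂ) (i : ι) : 0 ≤ A.singularValues i :=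
  (matAbs_posSemidef A).eigenvalues_nonneg i

lemma trace_mpow_matAbs (A : Matrix ι ι ℂ) (r : ℝ) :
    (mpow (matAbs A) r).trace = ∑ i, ((A.singularValues i ^ r : ℝ) : ℂ) := by
  have hV := (matAbs_posSemidef A).isHermitian.eigenvectorUnitary.2
  rw [mpow, dif_pos (matAbs_posSemidef A).isHermitian, trace_mul_cycle,
    ← star_eq_conjTranspose, mem_unitaryGroup_iff'.mp hV, Matrix.one_mul, trace_diagonal]
  rfl

lemma schatten_eq (p : ℝ) (A : Matrix ι ι ℂ) :
    schatten p A = (∑ i, A.singularValues i ^ p) ^ (1 / p) := by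
  rw [schatten, trace_mpow_matAbs, ← Complex.ofReal_sum, Complex.ofReal_re]

lemma conjTranspose_mul_mul_self_mul_of_eq {H V : Matrix ι ι ℂ} {d : ι → ℂ} (hV : Vᴴ * V = 1)
    (hH : H = V * diagonal d * Vᴴ) : Vᴴ * (H * H) * V = diagonal (d * d) := by
  have hV' : ∀ X, Vᴴ * (V * X) = X := fun X => by rw [← Matrix.mul_assoc, hV, Matrix.one_mul]
  simp only [hH, Matrix.mul_assoc, hV, hV', Matrix.mul_one, diagonal_mul_diagonal]
  rfl

lemma mul_diagonal_eq_zero_of_conjTranspose_mul_self {B : Matrix ι ι ℂ} {d e : ι → ℂ}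
    (hB : Bᴴ * B = diagonal d) (he : ∀ i, e i = 0 ∨ d i = 0) : B * diagonal e = 0 := by
  rw [← conjTranspose_mul_self_eq_zero, conjTranspose_mul, Matrix.mul_assoc, ← Matrix.mul_assoc Bᴴ,
    hB, diagonal_conjTranspose, diagonal_mul_diagonal, diagonal_mul_diagonal, diagonal_eq_zero]
  ext i
  rcases he i with h | h <;> simp [h]

lemma exists_svd_of_conjTranspose_mul_self {A V : Matrix ι ι ℂ} {s : ι → ℂ}
    (hV : V ∈ unitaryGroup ι ℂ) (hs : star s = s) (hA : (A * V)ᴴ * (A * V) = diagonal (s * s)) :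
    ∃ U : Matrix ι ι ℂ, ‖U‖ ≤ 1 ∧ A = U * diagonal s * Vᴴ ∧ Uᴴ * A = diagonal s * Vᴴ := by
  have hVV' : V * Vᴴ = 1 := by rw [← star_eq_conjTranspose]; exact mem_unitaryGroup_iff.mp hV
  -- with `0⁻¹ = 0`, `U` has zero columns where `s` vanishes, making it a partial isometry
  set U := A * V * diagonal s⁻¹
  have hUA : Uᴴ * A = diagonal s * Vᴴ := by
    calc Uᴴ * A = diagonal (star s⁻¹) * ((A * V)ᴴ * (A * V)) * Vᴴ := by
          simp only [U, conjTranspose_mul, diagonal_conjTranspose, Matrix.mul_assoc, hVV',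
            Matrix.mul_one]
      _ = diagonal s * Vᴴ := by
          rw [hA, diagonal_mul_diagonal]
          congr 2
          ext i
          have hsi : star (s i) = s i := congrFun hs i
          rcases eq_or_ne (s i) 0 with h | h <;> simp [h, hsi]
  have hUU : Uᴴ * U = diagonal (s * s⁻¹) := by
    calc Uᴴ * U = Uᴴ * A * (V * diagonal s⁻¹) := by simp only [U, Matrix.mul_assoc]
      _ = diagonal s * (Vᴴ * V) * diagonal s⁻¹ := by rw [hUA]; simp only [Matrix.mul_assoc]
      _ = diagonal (s * s⁻¹) := by
          rw [← star_eq_conjTranspose, mem_unitaryGroup_iff'.mp hV, Matrix.mul_one,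
            diagonal_mul_diagonal]
          rfl
  have hker : A * V * diagonal (1 - s * s⁻¹) = 0 :=
    mul_diagonal_eq_zero_of_conjTranspose_mul_self hA fun i => by
      rcases eq_or_ne (s i) 0 with h | h <;> simp [h]
  refine ⟨U, l2_opNorm_le_one_of_conjTranspose_mul_self_eq_diagonal hUU fun i => ?_, ?_, hUA⟩
  · rcases eq_or_ne (s i) 0 with h | h <;> simp [h]
  · calc A = A * V * (diagonal (s * s⁻¹) + diagonal (1 - s * s⁻¹)) * Vᴴ := by
          rw [diagonal_add]
          simp [Matrix.mul_assoc, hVV']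
      _ = U * diagonal s * Vᴴ := by
          rw [Matrix.mul_add, hker, add_zero]
          simp only [U, Matrix.mul_assoc, diagonal_mul_diagonal, mul_comm (s⁻¹ _)]
          rfl

theorem exists_svd (A : Matrix ι ι ℂ) :
    ∃ U V : Matrix ι ι ℂ, V ∈ unitaryGroup ι ℂ ∧ ‖U‖ ≤ 1 ∧
      A = U * diagonal (fun i => (A.singularValues i : ℂ)) * Vᴴ ∧
      Uᴴ * A = diagonal (fun i => (A.singularValues i : ℂ)) * Vᴴ := by
  have hAbs := (matAbs_posSemidef A).isHermitian
  have hV := hAbs.eigenvectorUnitary.2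
  have hVV : (hAbs.eigenvectorUnitary : Matrix ι ι ℂ)ᴴ * hAbs.eigenvectorUnitary = 1 := by
    rw [← star_eq_conjTranspose]
    exact mem_unitaryGroup_iff'.mp hV
  have hA := conjTranspose_mul_mul_self_mul_of_eq hVV hAbs.eq_eigenvectorUnitary_mul_diagonal_mul
  rw [matAbs_mul_matAbs, ← Matrix.mul_assoc, ← conjTranspose_mul, Matrix.mul_assoc] at hA
  obtain ⟨U, hU, hAU, hUA⟩ := exists_svd_of_conjTranspose_mul_self hV (by ext; simp) hA
  exact ⟨U, _, hV, hU, hAU, hUA⟩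

lemma trace_mul_mul_eq_sum {N U V : Matrix ι ι ℂ} {s : ι → ℂ} (hV : V ∈ unitaryGroup ι ℂ)
    (hN : Uᴴ * N = diagonal s * Vᴴ) (c : ι → ℂ) :
    (V * diagonal c * Uᴴ * N).trace = ∑ i, c i * s i := by
  rw [Matrix.mul_assoc, hN, ← Matrix.mul_assoc, trace_mul_comm]
  simp only [← Matrix.mul_assoc]
  rw [← star_eq_conjTranspose, mem_unitaryGroup_iff'.mp hV, Matrix.one_mul, diagonal_mul_diagonal,
    trace_diagonal]

end SingularValues

section PartialTrace

variable {ι J : Type*} [Fintype ι] [Fintype J] [DecidableEq J]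

lemma mul_diagonal_mul_conjTranspose_kronecker_one [DecidableEq ι] (U V : Matrix ι ι ℂ)
    (c : ι → ℂ) :
    (U * diagonal c * Vᴴ) ⊗ₖ (1 : Matrix J J ℂ) =
      (U ⊗ₖ (1 : Matrix J J ℂ)) * diagonal (fun x => c x.1) * (V ⊗ₖ (1 : Matrix J J ℂ))ᴴ := by
  have hc : diagonal (fun x : ι × J => c x.1) = diagonal c ⊗ₖ (1 : Matrix J J ℂ) := by
    rw [← diagonal_one, diagonal_kronecker_diagonal]
    simp
  rw [hc, conjTranspose_kronecker, conjTranspose_one, ← mul_kronecker_mul, ← mul_kronecker_mul,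
    Matrix.mul_one, Matrix.mul_one]

lemma trace_kronecker_one_mul (X : Matrix ι ι ℂ) (M : Matrix (ι × J) (ι × J) ℂ) :
    ((X ⊗ₖ (1 : Matrix J J ℂ)) * M).trace = (X * ptraceB M).trace := by
  simp only [trace, diag_apply, mul_apply, Fintype.sum_prod_type, kroneckerMap_apply, one_apply,
    ptraceB, of_apply, mul_ite, mul_one, mul_zero, ite_mul, zero_mul, Finset.mul_sum]
  refine Finset.sum_congr rfl fun i _ => ?_
  rw [Finset.sum_comm]
  refine Finset.sum_congr rfl fun b _ => Finset.sum_congr rfl fun j _ => ?_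
  simp

theorem sum_rpow_singularValues_ptraceB_le [DecidableEq ι] (M : Matrix (ι × J) (ι × J) ℂ)
    {p : ℝ} (hp : 1 ≤ p) :
    ∑ i, (ptraceB M).singularValues i ^ p ≤
      (Fintype.card J : ℝ) ^ (p - 1) * ∑ x, M.singularValues x ^ p := by
  obtain ⟨U, V, hV, hU, -, hUN⟩ := exists_svd (ptraceB M)
  obtain ⟨U', V', hV', hU', hM, -⟩ := exists_svd M
  set s := (ptraceB M).singularValues
  set t := M.singularValues
  set d : ℝ := (Fintype.card J : ℝ)
  have hs : ∀ i, 0 ≤ s i := singularValues_nonneg _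
  have ht : ∀ x, 0 ≤ t x := singularValues_nonneg M
  have hdual : ((V * diagonal (fun i => ((s i ^ (p - 1) : ℝ) : ℂ)) * Uᴴ) ⊗ₖ (1 : Matrix J J ℂ) *
      M).trace = ((∑ i, s i ^ p : ℝ) : ℂ) := by
    rw [trace_kronecker_one_mul, trace_mul_mul_eq_sum hV hUN, Complex.ofReal_sum]
    refine Finset.sum_congr rfl fun i _ => ?_
    rw [← Complex.ofReal_mul, ← Real.rpow_add_one' (hs i) (by linarith), sub_add_cancel]
  rcases isEmpty_or_nonempty J with hJ | hJ
  · rw [trace_eq_zero_of_isEmpty, eq_comm, Complex.ofReal_eq_zero] at hdual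
    rw [hdual]
    exact mul_nonneg (by positivity)
      (Finset.sum_nonneg fun x _ => Real.rpow_nonneg (ht x) p)
  have hd : 0 < d := Nat.cast_pos.mpr Fintype.card_pos
  have hB : U' * diagonal (fun x => ((d * t x : ℝ) : ℂ)) * V'ᴴ = (d : ℂ) • M := by
    conv_rhs => rw [hM]
    rw [← Matrix.smul_mul, ← Matrix.mul_smul, ← diagonal_smul]
    congr 3
    ext x
    simp
  have hyoung := norm_trace_mul_le_young
    ((l2_opNorm_kronecker_one_le V).trans (l2_opNorm_le_one_of_mem_unitaryGroup hV))
    ((l2_opNorm_kronecker_one_le U).trans hU) hU' (l2_opNorm_le_one_of_mem_unitaryGroup hV')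
    (a := fun x : ι × J => s x.1) (b := fun x => d * t x) (fun x => hs x.1)
    (fun x => mul_nonneg hd.le (ht x)) hp
  rw [← mul_diagonal_mul_conjTranspose_kronecker_one V U fun i => ((s i ^ (p - 1) : ℝ) : ℂ),
    hB, Matrix.mul_smul, trace_smul, hdual] at hyoung
  have hsum_s : ∑ x : ι × J, s x.1 ^ p = d * ∑ i, s i ^ p := by
    simp [Fintype.sum_prod_type_right, d]
  have hsum_t : ∑ x, (d * t x) ^ p = d ^ p * ∑ x, t x ^ p := by
    simp only [Real.mul_rpow hd.le (ht _), Finset.mul_sum]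
  rw [hsum_s, hsum_t, norm_smul, Complex.norm_real, Complex.norm_real, Real.norm_of_nonneg hd.le,
    Real.norm_of_nonneg (Finset.sum_nonneg fun i _ => Real.rpow_nonneg (hs i) p)] at hyoung
  exact le_rpow_sub_one_mul_of_mul_le hd hp hyoung

end PartialTrace

end Matrix

/-- The Schatten `p`-norm under partial trace: `‖Tr_B(M)‖_p ≤ d_B^{(p-1)/p}·‖M‖_p`. -/
theorem stmt13 (dA dB : ℕ)
    (M : Matrix (Fin dA × Fin dB) (Fin dA × Fin dB) ℂ) (p : ℝ) (hp : 1 ≤ p) :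
    schatten p (ptraceB M) ≤ (dB : ℝ) ^ ((p - 1) / p) * schatten p M := by
  have hT : 0 ≤ ∑ x, M.singularValues x ^ p :=
    Finset.sum_nonneg fun x _ => Real.rpow_nonneg (singularValues_nonneg M x) p
  rw [schatten_eq, schatten_eq, div_eq_mul_one_div (p - 1), Real.rpow_mul (Nat.cast_nonneg _),
    ← Real.mul_rpow (by positivity) hT]
  refine Real.rpow_le_rpow (Finset.sum_nonneg fun i _ =>
    Real.rpow_nonneg (singularValues_nonneg _ i) p) ?_ (by positivity)
  simpa using sum_rpow_singularValues_ptraceB_le M hp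

end
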